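/- Let d ≥ 2 and let f ∈ ℂ[z] have degree d. The escape rate G_f is harmonic on the open set Ω = {z ∈ ℂ : G_f(z) > 0}; that is, G_f is smooth on Ω with vanishing Laplacian there. -/

import Mathlib

/-- The escape rate `G_f(z) = lim_{n→∞} d⁻ⁿ · log⁺ |fⁿ(z)|` of a polynomial `f`,
where `d = deg f` and `log⁺ t = log (max t 1)`. -/
noncomputable def escapeRate (f : Polynomial ℂ) (z : ℂ) : ℝ :=
  Filter.limUnder Filter.atTop (fun n : ℕ =>
    ((f.natDegree : ℝ)⁻¹) ^ n * Real.log (max ‖(fun w => f.eval w)^[n] z‖ 1))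

/-!
Outside a large disc `‖w‖ ≤ R` we have `f w = a w^d q(w)` with `‖q(w) - 1‖ ≤ 1/2` and
`‖w‖ ≤ ‖f w‖`, so orbits stay outside and `d⁻ⁿ log ‖fⁿ w‖` telescopes to `log ‖w‖ + Re S(w)`, where
`S(w) = ∑ₖ d^{-(k+1)} (log a + Log q(fᵏ w))` is a uniformly convergent series of holomorphic
functions (the principal branch `Log` is holomorphic near `1`). Orbits that never leave the disc
have escape rate `0`, so for `G_f(z) > 0` some `fᴺ z` lies outside it, and near `z`
`G_f = d^{-N} (log ‖fᴺ‖ + Re (S ∘ fᴺ))` is a sum of harmonic functions. Harmonic functions on `ℂ`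
are real analytic, hence smooth.
-/

open Polynomial Filter Topology Bornology InnerProductSpace

theorem tendsto_add_of_hasSum_sub {E : Type*} [AddCommGroup E] [TopologicalSpace E]
    [IsTopologicalAddGroup E] {u : ℕ → E} {s : E} (h : HasSum (fun n ↦ u (n + 1) - u n) s) :
    Tendsto u atTop (𝓝 (u 0 + s)) := by
  refine (h.tendsto_sum_nat.const_add (u 0)).congr fun n ↦ ?_
  rw [Finset.sum_range_sub, add_sub_cancel]

variable {f : ℂ[X]} {R : ℝ} {w z : ℂ}

noncomputable def leadRatio (f : ℂ[X]) (w : ℂ) : ℂ :=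
  f.eval w / (f.leadingCoeff * w ^ f.natDegree)

theorem tendsto_leadRatio_cobounded (hf : f ≠ 0) : Tendsto (leadRatio f) (cobounded ℂ) (𝓝 1) :=
  (Asymptotics.isEquivalent_iff_tendsto_one ((eventually_ne_cobounded 0).mono fun _ hw ↦
    mul_ne_zero (leadingCoeff_ne_zero.mpr hf) (pow_ne_zero _ hw))).mp
    isEquivalent_cobounded_leading_monomial

structure IsEscapeRadius (f : ℂ[X]) (R : ℝ) : Prop where
  one_le : 1 ≤ R
  norm_leadRatio_sub_one_le : ∀ w : ℂ, R ≤ ‖w‖ → ‖leadRatio f w - 1‖ ≤ 1 / 2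
  norm_le_norm_eval : ∀ w : ℂ, R ≤ ‖w‖ → ‖w‖ ≤ ‖f.eval w‖

theorem exists_isEscapeRadius (hf : 1 < f.natDegree) : ∃ R, IsEscapeRadius f R := by
  have hf0 : f ≠ 0 := ne_zero_of_natDegree_gt hf
  have hratio : ∀ᶠ w in cobounded ℂ, ‖leadRatio f w - 1‖ ≤ 1 / 2 := by
    simpa [← dist_eq_norm] using
      (tendsto_leadRatio_cobounded hf0).eventually (Metric.closedBall_mem_nhds 1 one_half_pos)
  have hgrowth : ∀ᶠ w in cobounded ℂ, ‖w‖ ≤ ‖f.eval w‖ := by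
    have hdeg : (X : ℂ[X]).degree < f.degree := by
      rw [degree_X, degree_eq_natDegree hf0]; exact_mod_cast hf
    simpa using (isLittleO_cobounded_of_degree_lt hdeg).bound one_pos
  obtain ⟨R, -, hR⟩ := (hasBasis_cobounded_norm.eventually_iff).mp (hratio.and hgrowth)
  exact ⟨max R 1, le_max_right R 1, fun _ hw ↦ (hR (le_of_max_le_left hw)).1,
    fun _ hw ↦ (hR (le_of_max_le_left hw)).2⟩

theorem IsEscapeRadius.lt_norm_iterate (hR : IsEscapeRadius f R) (hw : R < ‖w‖) (n : ℕ) :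
    R < ‖(f.eval ·)^[n] w‖ := by
  induction n with
  | zero => exact hw
  | succ n ih =>
    rw [Function.iterate_succ_apply']
    exact ih.trans_le (hR.norm_le_norm_eval _ ih.le)

theorem IsEscapeRadius.ne_zero_of_lt_norm (hR : IsEscapeRadius f R) (hw : R < ‖w‖) : w ≠ 0 :=
  norm_pos_iff.mp (zero_lt_one.trans_le (hR.one_le.trans hw.le))

theorem leadRatio_ne_zero (hq : ‖leadRatio f w - 1‖ ≤ 1 / 2) : leadRatio f w ≠ 0 := by
  intro h
  norm_num [h] at hq

noncomputable def logCorrection (f : ℂ[X]) (w : ℂ) : ℂ :=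
  Complex.log f.leadingCoeff + Complex.log (leadRatio f w)

theorem log_norm_eval_eq (hf : f ≠ 0) (hw : w ≠ 0) (hq : leadRatio f w ≠ 0) :
    Real.log ‖f.eval w‖ = f.natDegree * Real.log ‖w‖ + (logCorrection f w).re := by
  have ha : f.leadingCoeff ≠ 0 := leadingCoeff_ne_zero.mpr hf
  have hfactor : f.eval w = f.leadingCoeff * w ^ f.natDegree * leadRatio f w := by
    rw [leadRatio, mul_div_cancel₀ _ (mul_ne_zero ha (pow_ne_zero _ hw))]
  rw [hfactor, norm_mul, norm_mul, norm_pow, Real.log_mul (by positivity) (by positivity),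
    Real.log_mul (by positivity) (by positivity), Real.log_pow, logCorrection, Complex.add_re,
    Complex.log_re, Complex.log_re]
  ring

theorem norm_logCorrection_le (hq : ‖leadRatio f w - 1‖ ≤ 1 / 2) :
    ‖logCorrection f w‖ ≤ ‖Complex.log f.leadingCoeff‖ + 1 := by
  have hlog : ‖Complex.log (leadRatio f w)‖ ≤ 1 := by
    have := Complex.norm_log_one_add_half_le_self hq
    rw [add_sub_cancel] at this
    linarith
  exact (norm_add_le _ _).trans (by linarith)

theorem differentiableAt_logCorrection (hf : f ≠ 0) (hw : w ≠ 0)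
    (hq : ‖leadRatio f w - 1‖ < 1) : DifferentiableAt ℂ (logCorrection f) w := by
  have hslit : leadRatio f w ∈ Complex.slitPlane := by
    simpa using Complex.mem_slitPlane_of_norm_lt_one hq
  have hratio : DifferentiableAt ℂ (leadRatio f) w :=
    f.differentiable.differentiableAt.div ((differentiableAt_pow _).const_mul _)
      (mul_ne_zero (leadingCoeff_ne_zero.mpr hf) (pow_ne_zero _ hw))
  exact (Complex.differentiableAt_log hslit).comp w hratio |>.const_add _

noncomputable def escapeSeriesTerm (f : ℂ[X]) (k : ℕ) (w : ℂ) : ℂ :=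
  ((f.natDegree : ℝ)⁻¹ ^ (k + 1)) • logCorrection f ((f.eval ·)^[k] w)

noncomputable def escapeSeries (f : ℂ[X]) (w : ℂ) : ℂ :=
  ∑' k, escapeSeriesTerm f k w

theorem IsEscapeRadius.norm_escapeSeriesTerm_le (hR : IsEscapeRadius f R) (hw : R < ‖w‖)
    (k : ℕ) : ‖escapeSeriesTerm f k w‖ ≤
      (‖Complex.log f.leadingCoeff‖ + 1) * (f.natDegree : ℝ)⁻¹ ^ (k + 1) := by
  rw [escapeSeriesTerm, norm_smul, Real.norm_of_nonneg (by positivity), mul_comm]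
  gcongr
  exact norm_logCorrection_le (hR.norm_leadRatio_sub_one_le _ (hR.lt_norm_iterate hw k).le)

theorem summable_escapeSeries_bound (hd : 1 < f.natDegree) :
    Summable fun k : ℕ ↦ (‖Complex.log f.leadingCoeff‖ + 1) * (f.natDegree : ℝ)⁻¹ ^ (k + 1) := by
  have hd' : (1 : ℝ) < f.natDegree := by exact_mod_cast hd
  have hgeom := summable_geometric_of_lt_one (inv_nonneg.mpr (Nat.cast_nonneg _))
    (inv_lt_one_of_one_lt₀ hd')
  exact (hgeom.mul_left ((‖Complex.log f.leadingCoeff‖ + 1) * (f.natDegree : ℝ)⁻¹)).congr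
    fun k ↦ by ring

theorem IsEscapeRadius.hasSum_escapeSeries (hR : IsEscapeRadius f R) (hd : 1 < f.natDegree)
    (hw : R < ‖w‖) : HasSum (escapeSeriesTerm f · w) (escapeSeries f w) :=
  (Summable.of_norm_bounded (summable_escapeSeries_bound hd)
    (hR.norm_escapeSeriesTerm_le hw)).hasSum

theorem IsEscapeRadius.differentiableOn_escapeSeries (hR : IsEscapeRadius f R)
    (hd : 1 < f.natDegree) : DifferentiableOn ℂ (escapeSeries f) {w | R < ‖w‖} := by
  have hf : f ≠ 0 := ne_zero_of_natDegree_gt hd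
  have hopen : IsOpen {w : ℂ | R < ‖w‖} := isOpen_lt continuous_const continuous_norm
  refine Complex.differentiableOn_tsum_of_summable_norm (summable_escapeSeries_bound hd)
    (fun k w hw ↦ ?_) hopen fun k w hw ↦ hR.norm_escapeSeriesTerm_le hw k
  have hwk := hR.lt_norm_iterate hw k
  have hlog : DifferentiableAt ℂ (logCorrection f) ((f.eval ·)^[k] w) :=
    differentiableAt_logCorrection hf (hR.ne_zero_of_lt_norm hwk)
      ((hR.norm_leadRatio_sub_one_le _ hwk.le).trans_lt one_half_lt_one)
  exact ((hlog.comp w (f.differentiable.iterate k w)).const_smul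
    ((f.natDegree : ℝ)⁻¹ ^ (k + 1))).differentiableWithinAt

noncomputable def escapeApprox (f : ℂ[X]) (z : ℂ) (n : ℕ) : ℝ :=
  (f.natDegree : ℝ)⁻¹ ^ n * Real.log (max ‖(f.eval ·)^[n] z‖ 1)

theorem escapeApprox_add (f : ℂ[X]) (z : ℂ) (n N : ℕ) :
    escapeApprox f z (n + N) =
      (f.natDegree : ℝ)⁻¹ ^ N * escapeApprox f ((f.eval ·)^[N] z) n := by
  rw [escapeApprox, escapeApprox, Function.iterate_add_apply, pow_add]
  ring

theorem IsEscapeRadius.tendsto_escapeApprox (hR : IsEscapeRadius f R) (hd : 1 < f.natDegree)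
    (hw : R < ‖w‖) :
    Tendsto (escapeApprox f w) atTop (𝓝 (Real.log ‖w‖ + (escapeSeries f w).re)) := by
  have hf : f ≠ 0 := ne_zero_of_natDegree_gt hd
  have happrox (n : ℕ) :
      escapeApprox f w n = (f.natDegree : ℝ)⁻¹ ^ n * Real.log ‖(f.eval ·)^[n] w‖ := by
    rw [escapeApprox, max_eq_left (hR.one_le.trans (hR.lt_norm_iterate hw n).le)]
  have hstep (n : ℕ) :
      escapeApprox f w (n + 1) - escapeApprox f w n = (escapeSeriesTerm f n w).re := by
    have hwn := hR.lt_norm_iterate hw n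
    rw [happrox, happrox, Function.iterate_succ_apply', log_norm_eval_eq hf
      (hR.ne_zero_of_lt_norm hwn) (leadRatio_ne_zero (hR.norm_leadRatio_sub_one_le _ hwn.le)),
      escapeSeriesTerm, Complex.smul_re, pow_succ]
    have hd0 : (f.natDegree : ℝ) ≠ 0 := Nat.cast_ne_zero.mpr (by omega)
    linear_combination (f.natDegree : ℝ)⁻¹ ^ n * Real.log ‖(f.eval ·)^[n] w‖ *
      inv_mul_cancel₀ hd0
  have hsum : HasSum (fun n ↦ escapeApprox f w (n + 1) - escapeApprox f w n)
      (escapeSeries f w).re := by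
    simpa only [hstep] using Complex.hasSum_re (hR.hasSum_escapeSeries hd hw)
  simpa [happrox 0] using tendsto_add_of_hasSum_sub hsum

theorem escapeRate_eq_of_tendsto {L : ℝ} (h : Tendsto (escapeApprox f z) atTop (𝓝 L)) :
    escapeRate f z = L :=
  h.limUnder_eq

theorem escapeRate_eq_zero_of_norm_iterate_le (hd : 1 < f.natDegree)
    (h : ∀ n, ‖(f.eval ·)^[n] z‖ ≤ R) : escapeRate f z = 0 := by
  have hd' : (1 : ℝ) < f.natDegree := by exact_mod_cast hd
  have hlim : Tendsto (fun n ↦ (f.natDegree : ℝ)⁻¹ ^ n * Real.log (max R 1)) atTop (𝓝 0) := by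
    simpa using (tendsto_pow_atTop_nhds_zero_of_lt_one (by positivity)
      (inv_lt_one_of_one_lt₀ hd')).mul_const (Real.log (max R 1))
  refine escapeRate_eq_of_tendsto (squeeze_zero (fun n ↦ ?_) (fun n ↦ ?_) hlim)
  · exact mul_nonneg (by positivity) (Real.log_nonneg (le_max_right _ _))
  · unfold escapeApprox
    gcongr
    exact h n

theorem IsEscapeRadius.escapeRate_eq (hR : IsEscapeRadius f R) (hd : 1 < f.natDegree) {N : ℕ}
    (hz : R < ‖(f.eval ·)^[N] z‖) :
    escapeRate f z = (f.natDegree : ℝ)⁻¹ ^ N *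
      (Real.log ‖(f.eval ·)^[N] z‖ + (escapeSeries f ((f.eval ·)^[N] z)).re) := by
  apply escapeRate_eq_of_tendsto
  rw [← tendsto_add_atTop_iff_nat N]
  simpa only [escapeApprox_add] using (hR.tendsto_escapeApprox hd hz).const_mul _

theorem harmonicAt_escapeRate (hd : 1 < f.natDegree) (hz : 0 < escapeRate f z) :
    HarmonicAt (escapeRate f) z := by
  obtain ⟨R, hR⟩ := exists_isEscapeRadius hd
  obtain ⟨N, hN⟩ : ∃ N, R < ‖(f.eval ·)^[N] z‖ := by
    by_contra! h
    exact hz.ne' (escapeRate_eq_zero_of_norm_iterate_le hd h)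
  have hiter : Differentiable ℂ (f.eval ·)^[N] := f.differentiable.iterate N
  have hU : {y | R < ‖(f.eval ·)^[N] y‖} ∈ 𝓝 z :=
    (isOpen_lt continuous_const hiter.continuous.norm).mem_nhds hN
  rw [harmonicAt_congr_nhds (eventually_of_mem hU fun y hy ↦ hR.escapeRate_eq hd hy)]
  have hlog : HarmonicAt (fun y ↦ Real.log ‖(f.eval ·)^[N] y‖) z :=
    (hiter.analyticAt z).harmonicAt_log_norm (hR.ne_zero_of_lt_norm hN)
  have hseries : HarmonicAt (fun y ↦ (escapeSeries f ((f.eval ·)^[N] y)).re) z :=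
    (((hR.differentiableOn_escapeSeries hd).analyticAt
      ((isOpen_lt continuous_const continuous_norm).mem_nhds hN)).comp
      (hiter.analyticAt z)).harmonicAt_re
  exact (hlog.add hseries).const_smul

/-- For a polynomial `f` of degree `d ≥ 2`, the escape rate `G_f` is
harmonic on `Ω = {z : G_f(z) > 0}`: it is smooth on `Ω` and its Laplacian (the sum of the
second derivatives in the real coordinate directions `1` and `I` of `ℂ ≅ ℝ²`) vanishes
there. -/
theorem escapeRate_harmonic_on_positive_set (d : ℕ) (hd : 2 ≤ d)
    (f : Polynomial ℂ) (hdeg : f.natDegree = d) :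
    ContDiffOn ℝ (⊤ : ℕ∞) (escapeRate f) {z : ℂ | 0 < escapeRate f z} ∧
    ∀ z ∈ {z : ℂ | 0 < escapeRate f z},
      iteratedFDeriv ℝ 2 (escapeRate f) z ![1, 1]
        + iteratedFDeriv ℝ 2 (escapeRate f) z ![Complex.I, Complex.I] = 0 := by
  subst hdeg
  have harmonic (z : ℂ) (hz : 0 < escapeRate f z) : HarmonicAt (escapeRate f) z :=
    harmonicAt_escapeRate hd hz
  refine ⟨fun z hz ↦ (HarmonicAt.analyticAt (harmonic z hz)).contDiffAt.contDiffWithinAt,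
    fun z hz ↦ ?_⟩
  rw [← congrFun (laplacian_eq_iteratedFDeriv_complexPlane (escapeRate f)) z]
  exact (harmonic z hz).2.eq_of_nhds
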